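/- Let f: ℝ⁴ → ℝ be continuous, compactly supported, and radially symmetric (f(x) = f₀(|x|)). For any η > 0, ∫_{x₁ > η} f(x)/(x₁ − η)^{1/2} dx = η^{−1/2} ∫_η^∞ f₀(ρ) h(ρ/η) ρ³ dρ, where h(r) = (4π/r²) ∫₁^r √((r² − z²)/(z − 1)) dz. -/

import Mathlib

open Real MeasureTheory

noncomputable def hker (r : ℝ) : ℝ :=
  (4 * Real.pi / r^2) * ∫ z in (1:ℝ)..r, Real.sqrt ((r^2 - z^2)/(z - 1))

/-!
Write `x = (t, y) ∈ ℝ × ℝ³` and `f = g ∘ ‖·‖`. For fixed `t`, integrating over `y` in spherical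
coordinates and substituting `ρ = √(t² + ‖y‖²)` gives `4π ∫_{ρ > t} ρ √(ρ² - t²) g(ρ) dρ`.
Exchanging the `t`- and `ρ`-integrals over the triangle `η < t < ρ` leaves the inner integral
`∫_η^ρ √(ρ² - t²) / √(t - η) dt`, which the substitution `t = η z` turns into
`η^{3/2} ∫_1^{ρ/η} √(((ρ/η)² - z²) / (z - 1)) dz`, i.e. into the kernel `hker`.
Both uses of Fubini are justified because, `g` being bounded with bounded support, the integrands
are dominated by a multiple of `(t - η)^{-1/2}` on a bounded box and vanish outside it.
-/

open Set Function

theorem integrableOn_Ioc_inv_sqrt_sub (a b : ℝ) :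
    IntegrableOn (fun t => (√(t - a))⁻¹) (Ioc a b) := by
  rcases le_or_gt a b with hab | hba
  · have hrpow := (intervalIntegral.intervalIntegrable_rpow' (r := -(1 / 2)) (by norm_num)
      (a := 0) (b := b - a)).comp_sub_right a
    rw [zero_add, sub_add_cancel, intervalIntegrable_iff_integrableOn_Ioc_of_le hab] at hrpow
    refine hrpow.congr_fun (fun t ht => ?_) measurableSet_Ioc
    beta_reduce
    rw [rpow_neg (sub_nonneg.2 ht.1.le), sqrt_eq_rpow]
  · simp [Ioc_eq_empty_of_le hba.le]

section Prod

variable {α β E : Type*} [MeasurableSpace α] [MeasurableSpace β] [NormedAddCommGroup E]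
  {μ : Measure α} {ν : Measure β} [SFinite μ] [SFinite ν] {s : Set α} {t : Set β}

theorem integrableOn_prod_of_norm_le_comp_fst (hs : MeasurableSet s) (ht : MeasurableSet t)
    (hνt : ν t ≠ ⊤) {F : α × β → E} {u : α → ℝ} (hu : IntegrableOn u s μ)
    (hF : AEStronglyMeasurable F ((μ.prod ν).restrict (s ×ˢ t)))
    (hbound : ∀ p ∈ s ×ˢ t, ‖F p‖ ≤ u p.1) : IntegrableOn F (s ×ˢ t) (μ.prod ν) := by
  have : IsFiniteMeasure (ν.restrict t) := isFiniteMeasure_restrict.2 hνt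
  rw [← Measure.prod_restrict] at hF
  rw [IntegrableOn, ← Measure.prod_restrict]
  refine (hu.comp_fst (ν.restrict t)).mono' hF ?_
  rw [Measure.prod_restrict]
  exact ae_restrict_of_forall_mem (hs.prod ht) hbound

end Prod

theorem measurableSet_lt_fst_lt_snd (a : ℝ) : MeasurableSet {p : ℝ × ℝ | a < p.1 ∧ p.1 < p.2} :=
  (measurableSet_lt measurable_const measurable_fst).inter
    (measurableSet_lt measurable_fst measurable_snd)

theorem integral_Ioi_integral_Ioi_eq_integral_Ioi_integral_Ioo {E : Type*} [NormedAddCommGroup E]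
    [NormedSpace ℝ E] {F : ℝ → ℝ → E} {a : ℝ}
    (hF : IntegrableOn (uncurry F) {p : ℝ × ℝ | a < p.1 ∧ p.1 < p.2}) :
    ∫ t in Ioi a, ∫ ρ in Ioi t, F t ρ = ∫ ρ in Ioi a, ∫ t in Ioo a ρ, F t ρ := by
  set T := {p : ℝ × ℝ | a < p.1 ∧ p.1 < p.2}
  have hint : Integrable (uncurry fun t ρ => T.indicator (uncurry F) (t, ρ)) (volume.prod volume) :=
    (integrable_indicator_iff (measurableSet_lt_fst_lt_snd a)).2 hF
  have h := integral_integral_swap hint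
  simp only [T, indicator_apply, mem_ofPred_eq, uncurry_apply_pair] at h
  convert h using 1
  · rw [← integral_indicator measurableSet_Ioi]
    congr 1 with t
    by_cases hat : a < t
    · simp [hat, ← integral_indicator measurableSet_Ioi, indicator_apply]
    · simp [hat]
  · rw [← integral_indicator measurableSet_Ioi]
    congr 1 with ρ
    by_cases haρ : a < ρ
    · simp [haρ, ← integral_indicator measurableSet_Ioo, indicator_apply]
    · have hempty : ∀ t, ¬(a < t ∧ t < ρ) := fun t h => haρ (h.1.trans h.2)
      simp [haρ, hempty]

noncomputable def EuclideanSpace.consMeasurableEquiv (n : ℕ) :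
    ℝ × EuclideanSpace ℝ (Fin n) ≃ᵐ EuclideanSpace ℝ (Fin (n + 1)) :=
  ((MeasurableEquiv.refl ℝ).prodCongr (MeasurableEquiv.toLp 2 (Fin n → ℝ)).symm).trans <|
    (MeasurableEquiv.piFinSuccAbove (fun _ : Fin (n + 1) => ℝ) 0).symm.trans
      (MeasurableEquiv.toLp 2 (Fin (n + 1) → ℝ))

namespace EuclideanSpace

theorem measurePreserving_consMeasurableEquiv (n : ℕ) :
    MeasurePreserving (consMeasurableEquiv n) :=
  ((MeasurePreserving.id volume).prod
      (volume_preserving_symm_measurableEquiv_toLp (Fin n))).trans <|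
    (volume_preserving_piFinSuccAbove (fun _ : Fin (n + 1) => ℝ) 0).symm.trans
      (volume_preserving_symm_measurableEquiv_toLp (Fin (n + 1))).symm

@[simp]
theorem consMeasurableEquiv_apply_zero (n : ℕ) (t : ℝ) (y : EuclideanSpace ℝ (Fin n)) :
    consMeasurableEquiv n (t, y) 0 = t := by
  simp [consMeasurableEquiv, MeasurableEquiv.piFinSuccAbove, MeasurableEquiv.prodCongr]

theorem norm_consMeasurableEquiv (n : ℕ) (t : ℝ) (y : EuclideanSpace ℝ (Fin n)) :
    ‖consMeasurableEquiv n (t, y)‖ = √(t ^ 2 + ‖y‖ ^ 2) := by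
  rw [← sqrt_sq (norm_nonneg _), real_norm_sq_eq, real_norm_sq_eq]
  simp [consMeasurableEquiv, MeasurableEquiv.piFinSuccAbove, MeasurableEquiv.prodCongr,
    Fin.sum_univ_succ]

theorem integral_fun_norm_fin_three (G : ℝ → ℝ) :
    ∫ y : EuclideanSpace ℝ (Fin 3), G ‖y‖ = 4 * π * ∫ s in Ioi (0 : ℝ), s ^ 2 * G s := by
  rw [integral_fun_norm_addHaar volume G, measureReal_def, volume_ball_fin_three,
    ENNReal.ofReal_one, one_pow, one_mul, ENNReal.toReal_ofReal (by positivity),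
    finrank_euclideanSpace_fin, nsmul_eq_mul, smul_eq_mul]
  simp_rw [smul_eq_mul]
  push_cast
  ring

end EuclideanSpace

theorem integral_Ioi_sq_mul_comp_sqrt_sq_add_sq (G : ℝ → ℝ) {t : ℝ} (ht : 0 ≤ t) :
    ∫ s in Ioi (0 : ℝ), s ^ 2 * G √(t ^ 2 + s ^ 2) = ∫ ρ in Ioi t, ρ * √(ρ ^ 2 - t ^ 2) * G ρ := by
  set φ : ℝ → ℝ := fun ρ => √(ρ ^ 2 - t ^ 2)
  have hpos : ∀ ρ ∈ Ioi t, 0 < ρ ^ 2 - t ^ 2 := fun ρ (hρ : t < ρ) => by nlinarith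
  have himage : φ '' Ioi t = Ioi 0 := by
    refine Subset.antisymm (image_subset_iff.2 fun ρ hρ => sqrt_pos.2 (hpos ρ hρ))
      fun s (hs : 0 < s) => ?_
    refine ⟨√(t ^ 2 + s ^ 2), ?_, ?_⟩
    · show t < √(t ^ 2 + s ^ 2)
      exact lt_sqrt_of_sq_lt (by nlinarith)
    · simp [φ, sq_sqrt (by positivity : 0 ≤ t ^ 2 + s ^ 2), sqrt_sq hs.le]
  have hderiv : ∀ ρ ∈ Ioi t, HasDerivWithinAt φ (ρ / φ ρ) (Ioi t) ρ := fun ρ hρ => by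
    have := ((hasDerivAt_pow 2 ρ).sub_const (t ^ 2)).sqrt (hpos ρ hρ).ne'
    refine this.hasDerivWithinAt.congr_deriv ?_
    simp only [φ]
    norm_num
    ring
  have hinj : InjOn φ (Ioi t) := fun a (ha : t < a) b (hb : t < b) hab => by
    have := congrArg (· ^ 2) hab
    simp only [φ, sq_sqrt (hpos a ha).le, sq_sqrt (hpos b hb).le] at this
    nlinarith
  rw [← himage, integral_image_eq_integral_abs_deriv_smul measurableSet_Ioi hderiv hinj]
  refine setIntegral_congr_fun measurableSet_Ioi fun ρ hρ => ?_
  have hφ : 0 < φ ρ := sqrt_pos.2 (hpos ρ hρ)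
  have hρ₀ : 0 < ρ := ht.trans_lt hρ
  rw [smul_eq_mul, abs_of_pos (div_pos hρ₀ hφ), sq_sqrt (hpos ρ hρ).le, add_sub_cancel,
    sqrt_sq hρ₀.le]
  field_simp
  linear_combination G ρ * (mul_self_sqrt (hpos ρ hρ).le).symm

theorem four_pi_mul_integral_sqrt_sq_sub_sq_div_sqrt_sub {η ρ : ℝ} (hη : 0 < η) (hηρ : η < ρ) :
    4 * π * ∫ t in Ioo η ρ, √(ρ ^ 2 - t ^ 2) / √(t - η)
      = η ^ (-(1 : ℝ) / 2) * ρ ^ 2 * hker (ρ / η) := by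
  set r := ρ / η
  have hρ : ρ = η * r := (mul_div_cancel₀ ρ hη.ne').symm
  have hpointwise : ∀ z ∈ uIcc 1 r,
      √(ρ ^ 2 - (η * z) ^ 2) / √(η * z - η) = √η * √((r ^ 2 - z ^ 2) / (z - 1)) := by
    intro z hz
    rw [uIcc_of_le ((one_le_div hη).2 hηρ.le)] at hz
    have hz₀ : 0 ≤ r ^ 2 - z ^ 2 := by nlinarith [hz.1, hz.2]
    rw [hρ, show (η * r) ^ 2 - (η * z) ^ 2 = η * (η * (r ^ 2 - z ^ 2)) by ring,
      show η * z - η = η * (z - 1) by ring, ← sqrt_div (by positivity), mul_div_mul_left _ _ hη.ne',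
      mul_div_assoc, sqrt_mul hη.le]
  have hsubst : ∫ t in η..ρ, √(ρ ^ 2 - t ^ 2) / √(t - η)
      = η * √η * ∫ z in (1 : ℝ)..r, √((r ^ 2 - z ^ 2) / (z - 1)) := by
    have := intervalIntegral.integral_comp_mul_left
      (fun t => √(ρ ^ 2 - t ^ 2) / √(t - η)) hη.ne' (a := 1) (b := r)
    rw [mul_one, ← hρ, intervalIntegral.integral_congr hpointwise,
      intervalIntegral.integral_const_mul, smul_eq_mul] at this
    rw [mul_assoc, this]
    field_simp
  rw [← integral_Ioc_eq_integral_Ioo, ← intervalIntegral.integral_of_le hηρ.le, hsubst, hker,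
    show (-(1 : ℝ) / 2) = -(1 / 2) by norm_num, rpow_neg hη.le, ← sqrt_eq_rpow]
  have hr : r ≠ 0 := (div_pos (hη.trans hηρ) hη).ne'
  rw [hρ]
  field_simp
  rw [sq_sqrt hη.le]

theorem exists_continuous_profile_of_radial {E : Type*} [NormedAddCommGroup E] [NormedSpace ℝ E]
    [Nontrivial E] {f : E → ℝ} {f₀ : ℝ → ℝ} (hf : Continuous f) (hsupp : HasCompactSupport f)
    (hrad : ∀ x, f x = f₀ ‖x‖) :
    ∃ g : ℝ → ℝ, Continuous g ∧ HasCompactSupport g ∧ (∀ x, f x = g ‖x‖) ∧ EqOn g f₀ (Ici 0) := by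
  obtain ⟨e, he⟩ := exists_norm_eq E zero_le_one
  have hline : Isometry fun s : ℝ => s • e :=
    Isometry.of_dist_eq fun s t => by simp [dist_eq_norm, ← sub_smul, norm_smul, he]
  have hprofile : EqOn (fun s => f (s • e)) f₀ (Ici 0) := fun s (hs : 0 ≤ s) => by
    simp [hrad, norm_smul, he, abs_of_nonneg hs]
  refine ⟨fun s => f (s • e), by fun_prop, hsupp.comp_isClosedEmbedding hline.isClosedEmbedding,
    fun x => ?_, hprofile⟩
  rw [hrad, hprofile (norm_nonneg x)]

section Integrability

variable {g : ℝ → ℝ} {η : ℝ}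

theorem integrableOn_comp_sqrt_sq_add_norm_sq_div_sqrt_sub {F : Type*} [NormedAddCommGroup F]
    [MeasurableSpace F] [BorelSpace F] [ProperSpace F] (ν : Measure F) [IsFiniteMeasureOnCompacts ν]
    (hg : Continuous g) (hgc : HasCompactSupport g) :
    IntegrableOn (fun p : ℝ × F => g √(p.1 ^ 2 + ‖p.2‖ ^ 2) / √(p.1 - η))
      (Ioi η ×ˢ univ) (volume.prod ν) := by
  obtain ⟨C, hC⟩ := hgc.exists_bound_of_continuous hg
  obtain ⟨R, -, hR⟩ := hgc.exists_pos_le_norm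
  have hbox : IntegrableOn (fun p : ℝ × F => g √(p.1 ^ 2 + ‖p.2‖ ^ 2) / √(p.1 - η))
      (Ioc η R ×ˢ Metric.closedBall 0 R) (volume.prod ν) := by
    refine integrableOn_prod_of_norm_le_comp_fst measurableSet_Ioc
      Metric.isClosed_closedBall.measurableSet measure_closedBall_lt_top.ne
      ((integrableOn_Ioc_inv_sqrt_sub η R).const_mul C)
      (by fun_prop : Measurable _).aestronglyMeasurable fun p _ => ?_
    rw [norm_div, div_eq_mul_inv, norm_of_nonneg (sqrt_nonneg _)]
    exact mul_le_mul_of_nonneg_right (hC _) (by positivity)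
  refine hbox.of_forall_sdiff_eq_zero (measurableSet_Ioi.prod MeasurableSet.univ) fun p hp => ?_
  obtain ⟨⟨ht, -⟩, hout⟩ := hp
  have hfst : p.1 ≤ √(p.1 ^ 2 + ‖p.2‖ ^ 2) :=
    (le_abs_self _).trans (abs_le_sqrt (le_add_of_nonneg_right (sq_nonneg _)))
  have hsnd : ‖p.2‖ ≤ √(p.1 ^ 2 + ‖p.2‖ ^ 2) :=
    (abs_norm _).symm.le.trans (abs_le_sqrt (le_add_of_nonneg_left (sq_nonneg _)))
  rw [hR, zero_div]
  rw [norm_of_nonneg (sqrt_nonneg _)]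
  by_contra! hlt
  exact hout ⟨⟨ht, hfst.trans hlt.le⟩, mem_closedBall_zero_iff.2 (hsnd.trans hlt.le)⟩

theorem integrableOn_triangle_sqrt_sq_sub_sq_div_sqrt_sub (hη : 0 ≤ η) (hg : Continuous g)
    (hgc : HasCompactSupport g) :
    IntegrableOn (uncurry fun t ρ => ρ * √(ρ ^ 2 - t ^ 2) * g ρ / √(t - η))
      {p : ℝ × ℝ | η < p.1 ∧ p.1 < p.2} := by
  obtain ⟨C, hC⟩ := hgc.exists_bound_of_continuous hg
  have hC₀ : 0 ≤ C := (norm_nonneg _).trans (hC 0)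
  obtain ⟨R, hR₀, hR⟩ := hgc.exists_pos_le_norm
  have hbox : IntegrableOn (uncurry fun t ρ => ρ * √(ρ ^ 2 - t ^ 2) * g ρ / √(t - η))
      (Ioc η R ×ˢ Ioc η R) := by
    refine integrableOn_prod_of_norm_le_comp_fst measurableSet_Ioc measurableSet_Ioc
      measure_Ioc_lt_top.ne ((integrableOn_Ioc_inv_sqrt_sub η R).const_mul (R * R * C))
      (by fun_prop : Measurable _).aestronglyMeasurable fun p hp => ?_
    obtain ⟨⟨ht, -⟩, hρ, hρR⟩ := hp
    have hρ₀ : 0 ≤ p.2 := hη.trans hρ.le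
    rw [uncurry_apply_pair, norm_div, div_eq_mul_inv, norm_mul, norm_mul, norm_of_nonneg hρ₀,
      norm_of_nonneg (sqrt_nonneg _), norm_of_nonneg (sqrt_nonneg _)]
    gcongr
    · exact sqrt_le_iff.2 ⟨hR₀.le, by nlinarith⟩
    · exact hC _
  refine hbox.of_forall_sdiff_eq_zero (measurableSet_lt_fst_lt_snd η) fun p hp => ?_
  obtain ⟨⟨hηt, htρ⟩, hout⟩ := hp
  have hRρ : R ≤ p.2 := by
    by_contra! h
    exact hout ⟨⟨hηt, (htρ.trans h).le⟩, hηt.trans htρ, h.le⟩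
  simp [uncurry_def, hR p.2 (hRρ.trans (le_abs_self _))]

end Integrability

theorem setIntegral_halfspace_fun_norm_div_sqrt {g : ℝ → ℝ} (hg : Continuous g)
    (hgc : HasCompactSupport g) {η : ℝ} (hη : 0 < η) :
    ∫ x in {x : EuclideanSpace ℝ (Fin 4) | η < x 0}, g ‖x‖ / √(x 0 - η)
      = η ^ (-(1 : ℝ) / 2) * ∫ ρ in Ioi η, g ρ * hker (ρ / η) * ρ ^ 3 := by
  have hpreimage : EuclideanSpace.consMeasurableEquiv 3 ⁻¹' {x | η < x 0} = Ioi η ×ˢ univ := by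
    ext ⟨t, y⟩; simp
  have hslice : ∀ t ∈ Ioi η, ∫ y : EuclideanSpace ℝ (Fin 3), g √(t ^ 2 + ‖y‖ ^ 2) / √(t - η)
      = 4 * π * ∫ ρ in Ioi t, ρ * √(ρ ^ 2 - t ^ 2) * g ρ / √(t - η) := fun t (ht : η < t) => by
    rw [integral_div, EuclideanSpace.integral_fun_norm_fin_three (fun s => g √(t ^ 2 + s ^ 2)),
      integral_Ioi_sq_mul_comp_sqrt_sq_add_sq g (hη.trans ht).le, integral_div, mul_div_assoc]
  have hradial : ∀ ρ ∈ Ioi η, ∫ t in Ioo η ρ, ρ * √(ρ ^ 2 - t ^ 2) * g ρ / √(t - η)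
      = ρ * g ρ * ∫ t in Ioo η ρ, √(ρ ^ 2 - t ^ 2) / √(t - η) := fun ρ _ => by
    rw [← integral_const_mul]
    congr 1 with t
    ring
  calc ∫ x in {x : EuclideanSpace ℝ (Fin 4) | η < x 0}, g ‖x‖ / √(x 0 - η)
      = ∫ p in Ioi η ×ˢ univ, g √(p.1 ^ 2 + ‖p.2‖ ^ 2) / √(p.1 - η) := by
        rw [← (EuclideanSpace.measurePreserving_consMeasurableEquiv 3).setIntegral_preimage_emb
          (MeasurableEquiv.measurableEmbedding _), hpreimage]
        congr 1 with ⟨t, y⟩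
        simp [EuclideanSpace.norm_consMeasurableEquiv]
    _ = ∫ t in Ioi η, 4 * π * ∫ ρ in Ioi t, ρ * √(ρ ^ 2 - t ^ 2) * g ρ / √(t - η) := by
        rw [Measure.volume_eq_prod,
          setIntegral_prod _ (integrableOn_comp_sqrt_sq_add_norm_sq_div_sqrt_sub _ hg hgc),
          Measure.restrict_univ]
        exact setIntegral_congr_fun measurableSet_Ioi hslice
    _ = 4 * π * ∫ ρ in Ioi η, ρ * g ρ * ∫ t in Ioo η ρ, √(ρ ^ 2 - t ^ 2) / √(t - η) := by
        rw [integral_const_mul, integral_Ioi_integral_Ioi_eq_integral_Ioi_integral_Ioo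
          (integrableOn_triangle_sqrt_sq_sub_sq_div_sqrt_sub hη.le hg hgc),
          setIntegral_congr_fun measurableSet_Ioi hradial]
    _ = η ^ (-(1 : ℝ) / 2) * ∫ ρ in Ioi η, g ρ * hker (ρ / η) * ρ ^ 3 := by
        rw [← integral_const_mul, ← integral_const_mul]
        refine setIntegral_congr_fun measurableSet_Ioi fun ρ (hρ : η < ρ) => ?_
        linear_combination ρ * g ρ * four_pi_mul_integral_sqrt_sq_sub_sq_div_sqrt_sub hη hρ

/-- Half-space integral of a radial function in `ℝ⁴` expressed through the
kernel `hker` via hyperspherical coordinates. -/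
theorem halfspace_integral_radial (η : ℝ) (hη : 0 < η)
    (f : EuclideanSpace ℝ (Fin 4) → ℝ) (f₀ : ℝ → ℝ)
    (hf : Continuous f) (hsupp : HasCompactSupport f)
    (hrad : ∀ x, f x = f₀ ‖x‖) :
    (∫ x in {x : EuclideanSpace ℝ (Fin 4) | η < x 0},
        f x / Real.sqrt (x 0 - η))
    = η ^ (-(1:ℝ)/2) * ∫ ρ in Set.Ioi η, f₀ ρ * hker (ρ/η) * ρ^3 := by
  obtain ⟨g, hg, hgc, hfg, hgf₀⟩ := exists_continuous_profile_of_radial hf hsupp hrad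
  simp_rw [hfg]
  rw [setIntegral_halfspace_fun_norm_div_sqrt hg hgc hη]
  congr 1
  exact setIntegral_congr_fun measurableSet_Ioi fun ρ (hρ : η < ρ) => by
    rw [hgf₀ (mem_Ici.2 (hη.trans hρ).le)]
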